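/- For all integers p, q ≥ 0 and all real numbers x, y, writing z = x + i y, one has J_{p,q}(z) = Σ_{j=0}^{p+q} i^{p+q−j} ( Σ_{r+s=j, 0≤r≤p, 0≤s≤q} C(p,r) C(q,s) (−1)^{q−s} ) H_j(x) H_{p+q−j}(y), where H_n is the probabilist's Hermite polynomial (evaluated at the real argument and regarded as a complex number). -/

import Mathlib

open scoped ComplexConjugate

/-- The complex Hermite (Hermite–Laguerre–Itô) polynomial
`J_{p,q}(z) = Σ_{r=0}^{min(p,q)} (−2)^r r! C(p,r) C(q,r) z^{p−r} (conj z)^{q−r}`. -/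
noncomputable def complexHermite (p q : ℕ) (z : ℂ) : ℂ :=
  ∑ r ∈ Finset.range (min p q + 1),
    (-2 : ℂ) ^ r * (r.factorial : ℂ) * (p.choose r : ℂ) * (q.choose r : ℂ) *
      z ^ (p - r) * (conj z) ^ (q - r)

/-- The probabilist's Hermite polynomial `H_n` evaluated at `x : ℝ`. -/
noncomputable def hermiteEval (n : ℕ) (x : ℝ) : ℝ :=
  Polynomial.aeval x (Polynomial.hermite n)

/-!
Write the inner coefficient of the theorem as `[X^j] (X+1)^p (X-1)^q` and put
`Φ_N(P) = Σ_{j+m=N} i^m [X^j]P · H_j(x) H_m(y)`. The three-term recurrence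
`x H_j = H_{j+1} + j H_{j-1}` gives `z Φ_N(P) = Φ_{N+1}((X+1)P) + Φ_{N-1}((1+X)P' - N P)`,
and for `P = (X+1)^p (X-1)^q` the last polynomial is `2q (X+1)^p (X-1)^(q-1)`. So both sides obey
`J_{p+1,q} = z J_{p,q} - 2q J_{p,q-1}`, and induction on `p` leaves the case `p = 0`, where both
sides are complex conjugates of their values `z^q` at `(q, 0)`.
-/

open Polynomial Finset Complex

namespace Polynomial

theorem derivative_hermite_succ (n : ℕ) :
    derivative (hermite (n + 1)) = ((n + 1 : ℕ) : ℤ[X]) * hermite n := by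
  induction n with
  | zero => simp
  | succ n ih =>
    rw [hermite_succ (n + 1), derivative_sub, derivative_mul, derivative_X, ih,
      derivative_natCast_mul, hermite_succ n]
    push_cast
    ring

theorem derivative_hermite (n : ℕ) : derivative (hermite n) = n * hermite (n - 1) := by
  cases n with
  | zero => simp
  | succ n => exact derivative_hermite_succ n

theorem coeff_X_mul_derivative {R : Type*} [Semiring R] (P : R[X]) (j : ℕ) :
    (X * derivative P).coeff j = j * P.coeff j := by
  cases j with
  | zero => simp
  | succ j => rw [coeff_X_mul, coeff_derivative, ← Nat.cast_succ, Nat.cast_comm]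

theorem coeff_X_sub_one_pow (R : Type*) [Ring R] (n k : ℕ) :
    ((X - 1 : R[X]) ^ n).coeff k = (-1) ^ (n - k) * (n.choose k : R) := by
  rw [sub_eq_add_neg, ← C_1, ← C_neg, coeff_X_add_C_pow]

end Polynomial

theorem mul_hermiteEval (n : ℕ) (x : ℝ) :
    x * hermiteEval n x = hermiteEval (n + 1) x + n * hermiteEval (n - 1) x := by
  simp [hermiteEval, derivative_hermite]

theorem coeff_X_add_one_pow_mul_X_sub_one_pow (p q j : ℕ) :
    (((X + 1) ^ p * (X - 1) ^ q : ℂ[X])).coeff j =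
      ∑ rs ∈ antidiagonal j,
        (p.choose rs.1 : ℂ) * (q.choose rs.2 : ℂ) * (-1 : ℂ) ^ (q - rs.2) := by
  simp only [coeff_mul, coeff_X_add_one_pow, coeff_X_sub_one_pow]
  exact sum_congr rfl fun _ _ => by ring

theorem one_add_X_mul_derivative_sub_X_add_one_pow_mul_X_sub_one_pow (p q : ℕ) :
    (1 + X) * derivative ((X + 1) ^ p * (X - 1) ^ q : ℂ[X]) -
        C ((p + q : ℕ) : ℂ) * ((X + 1) ^ p * (X - 1) ^ q) =
      C (2 * q : ℂ) * ((X + 1) ^ p * (X - 1) ^ (q - 1)) := by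
  rcases p with _ | p <;> rcases q with _ | q <;>
    simp only [derivative_mul, derivative_pow, derivative_add, derivative_sub, derivative_X,
      derivative_one, map_mul, map_natCast, map_ofNat, Nat.add_sub_cancel] <;> push_cast <;> ring

noncomputable def hermiteSum (N : ℕ) (P : ℂ[X]) (x y : ℝ) : ℂ :=
  ∑ jm ∈ antidiagonal N,
    I ^ jm.2 * P.coeff jm.1 * hermiteEval jm.1 x * hermiteEval jm.2 y

theorem hermiteSum_C_mul (N : ℕ) (c : ℂ) (P : ℂ[X]) (x y : ℝ) :
    hermiteSum N (C c * P) x y = c * hermiteSum N P x y := by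
  simp only [hermiteSum, coeff_C_mul, mul_sum]
  exact sum_congr rfl fun _ _ => by ring

theorem ofReal_add_mul_I_mul_hermiteSum (N : ℕ) (P : ℂ[X]) (hP : P.natDegree ≤ N)
    (x y : ℝ) :
    ((x : ℂ) + y * I) * hermiteSum N P x y =
      hermiteSum (N + 1) ((X + 1) * P) x y +
        hermiteSum (N - 1) ((1 + X) * derivative P - C (N : ℂ) * P) x y := by
  have hrec : ∀ (t : ℝ) (n : ℕ), (t : ℂ) * hermiteEval n t =
      hermiteEval (n + 1) t + n * hermiteEval (n - 1) t := fun t n => by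
    exact_mod_cast congrArg ((↑) : ℝ → ℂ) (mul_hermiteEval n t)
  rcases N with _ | n
  · obtain ⟨c, rfl⟩ : ∃ c, P = C c := ⟨_, eq_C_of_natDegree_le_zero hP⟩
    simp [hermiteSum, Nat.sum_antidiagonal_succ, hermiteEval, coeff_one]
    ring
  have hshift : hermiteSum (n + 2) ((X + 1) * P) x y =
      (∑ jm ∈ antidiagonal (n + 1),
        I ^ jm.2 * P.coeff jm.1 * hermiteEval (jm.1 + 1) x * hermiteEval jm.2 y) +
      ∑ jm ∈ antidiagonal (n + 1),
        I ^ (jm.2 + 1) * P.coeff jm.1 * hermiteEval jm.1 x * hermiteEval (jm.2 + 1) y := by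
    simp only [hermiteSum, add_mul, one_mul, coeff_add, mul_add, sum_add_distrib]
    congr 1
    · rw [Nat.sum_antidiagonal_succ]
      simp [coeff_X_mul]
    · rw [Nat.sum_antidiagonal_succ']
      simp [coeff_eq_zero_of_natDegree_lt (show P.natDegree < n + 2 by omega)]
  have hlower : hermiteSum n ((1 + X) * derivative P - C ((n + 1 : ℕ) : ℂ) * P) x y =
      (∑ jm ∈ antidiagonal (n + 1),
        I ^ jm.2 * (jm.1 * P.coeff jm.1) * hermiteEval (jm.1 - 1) x * hermiteEval jm.2 y) +
      ∑ jm ∈ antidiagonal (n + 1),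
        I ^ (jm.2 + 1) * (jm.2 * P.coeff jm.1) * hermiteEval jm.1 x *
          hermiteEval (jm.2 - 1) y := by
    rw [Nat.sum_antidiagonal_succ, Nat.sum_antidiagonal_succ', hermiteSum]
    simp only [Nat.cast_zero, zero_mul, mul_zero, zero_add, Nat.add_sub_cancel,
      ← sum_add_distrib]
    refine sum_congr rfl fun jm hjm => ?_
    have hn : ((n + 1 : ℕ) : ℂ) = jm.1 + jm.2 + 1 := by
      rw [← mem_antidiagonal.mp hjm]; push_cast; ring
    simp only [add_mul, one_mul, coeff_add, coeff_sub, coeff_C_mul, coeff_X_mul_derivative,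
      coeff_derivative, hn]
    push_cast
    linear_combination (-(I ^ jm.2 * (jm.2 + 1) * P.coeff jm.1 * hermiteEval jm.1 x *
      hermiteEval jm.2 y)) * I_sq
  rw [Nat.add_sub_cancel, hshift, hlower, hermiteSum, mul_sum, ← sum_add_distrib,
    ← sum_add_distrib, ← sum_add_distrib]
  refine sum_congr rfl fun jm _ => ?_
  linear_combination (I ^ jm.2 * P.coeff jm.1 * hermiteEval jm.2 y) * hrec x jm.1 +
    (I ^ (jm.2 + 1) * P.coeff jm.1 * hermiteEval jm.1 x) * hrec y jm.2

noncomputable def hermiteExpansion (p q : ℕ) (x y : ℝ) : ℂ :=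
  hermiteSum (p + q) ((X + 1) ^ p * (X - 1) ^ q) x y

theorem hermiteExpansion_succ_left (p q : ℕ) (x y : ℝ) :
    hermiteExpansion (p + 1) q x y =
      ((x : ℂ) + y * I) * hermiteExpansion p q x y - 2 * q * hermiteExpansion p (q - 1) x y := by
  have hdeg : ((X + 1) ^ p * (X - 1) ^ q : ℂ[X]).natDegree ≤ p + q := by
    compute_degree
  rw [hermiteExpansion, hermiteExpansion, ofReal_add_mul_I_mul_hermiteSum _ _ hdeg,
    one_add_X_mul_derivative_sub_X_add_one_pow_mul_X_sub_one_pow, hermiteSum_C_mul, ← mul_assoc,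
    ← pow_succ', add_right_comm]
  rcases q with _ | q
  · simp
  · simp [hermiteExpansion, add_assoc]

theorem hermiteExpansion_zero_right (p : ℕ) (x y : ℝ) :
    hermiteExpansion p 0 x y = ((x : ℂ) + y * I) ^ p := by
  induction p with
  | zero => simp [hermiteExpansion, hermiteSum, hermiteEval]
  | succ p ih => rw [hermiteExpansion_succ_left, ih, pow_succ']; simp

theorem hermiteExpansion_zero_left (q : ℕ) (x y : ℝ) :
    hermiteExpansion 0 q x y = conj (hermiteExpansion q 0 x y) := by
  simp only [hermiteExpansion, hermiteSum, map_sum, zero_add, add_zero, pow_zero, one_mul, mul_one]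
  refine sum_congr rfl fun jm hjm => ?_
  have hm : q - jm.1 = jm.2 := by rw [← mem_antidiagonal.mp hjm, Nat.add_sub_cancel_left]
  simp only [coeff_X_sub_one_pow, coeff_X_add_one_pow, map_mul, map_pow,
    conj_I, conj_ofReal, map_natCast, hm]
  rw [neg_pow]
  ring

theorem complexHermite_zero_left (q : ℕ) (z : ℂ) : complexHermite 0 q z = conj z ^ q := by
  simp [complexHermite]

noncomputable def complexHermiteTerm (p q r : ℕ) (z : ℂ) : ℂ :=
  (-2 : ℂ) ^ r * (r.factorial : ℂ) * (p.choose r : ℂ) * (q.choose r : ℂ) *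
    z ^ (p - r) * (conj z) ^ (q - r)

theorem complexHermite_eq_sum_range (p q : ℕ) (z : ℂ) :
    complexHermite p q z = ∑ r ∈ range (q + 1), complexHermiteTerm p q r z := by
  refine sum_subset (range_subset_range.mpr (by omega)) fun r hr hr' => ?_
  have hpr : p < r := by simp only [mem_range] at hr hr'; omega
  simp [Nat.choose_eq_zero_of_lt hpr]

theorem cast_choose_succ_succ_mul_pow {R : Type*} [CommSemiring R] (p s : ℕ) (z : R) :
    ((p + 1).choose (s + 1) : R) * z ^ (p - s) =
      z * ((p.choose (s + 1) : R) * z ^ (p - (s + 1))) + (p.choose s : R) * z ^ (p - s) := by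
  rw [Nat.choose_succ_succ, Nat.cast_add, add_mul]
  rcases le_or_gt (s + 1) p with h | h
  · rw [show p - s = p - (s + 1) + 1 by omega, pow_succ']
    ring
  · simp [Nat.choose_eq_zero_of_lt h]

theorem complexHermiteTerm_succ_succ_succ (p q s : ℕ) (z : ℂ) :
    complexHermiteTerm (p + 1) (q + 1) (s + 1) z =
      z * complexHermiteTerm p (q + 1) (s + 1) z -
        2 * (q + 1) * complexHermiteTerm p q s z := by
  have hq : ((q + 1 : ℕ) : ℂ) * (q.choose s : ℂ) = ((q + 1).choose (s + 1) : ℂ) * (s + 1) :=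
    mod_cast Nat.add_one_mul_choose_eq q s
  simp only [complexHermiteTerm, Nat.add_sub_add_right, Nat.factorial_succ]
  push_cast at hq ⊢
  linear_combination (-2 : ℂ) ^ (s + 1) * ((s : ℂ) + 1) * (s.factorial : ℂ) *
      ((q + 1).choose (s + 1) : ℂ) * conj z ^ (q - s) * cast_choose_succ_succ_mul_pow p s z +
    2 * (-2 : ℂ) ^ s * (s.factorial : ℂ) * (p.choose s : ℂ) * z ^ (p - s) * conj z ^ (q - s) *
      hq

theorem complexHermite_succ_left (p q : ℕ) (z : ℂ) :
    complexHermite (p + 1) q z =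
      z * complexHermite p q z - 2 * q * complexHermite p (q - 1) z := by
  rcases q with _ | q
  · simp [complexHermite, pow_succ']
  rw [complexHermite_eq_sum_range, complexHermite_eq_sum_range, Nat.add_sub_cancel,
    complexHermite_eq_sum_range, sum_range_succ' _ (q + 1), sum_range_succ' _ (q + 1)]
  simp only [complexHermiteTerm_succ_succ_succ, sum_sub_distrib, ← mul_sum]
  simp only [complexHermiteTerm, pow_zero, Nat.factorial_zero, Nat.choose_zero_right,
    Nat.cast_one, Nat.sub_zero, Nat.cast_add]
  ring

theorem complexHermite_eq_hermiteExpansion (p q : ℕ) (x y : ℝ) :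
    complexHermite p q ((x : ℂ) + y * I) = hermiteExpansion p q x y := by
  induction p generalizing q with
  | zero =>
    rw [complexHermite_zero_left, hermiteExpansion_zero_left, hermiteExpansion_zero_right, map_pow]
  | succ p ih => rw [complexHermite_succ_left, hermiteExpansion_succ_left, ih, ih]

/-- **Expansion of complex Hermite polynomials in products of real Hermite polynomials.**
For `p, q ≥ 0` and real `x, y`, with `z = x + i y`,
`J_{p,q}(z) = Σ_{j=0}^{p+q} i^{p+q−j}
  (Σ_{r+s=j, 0 ≤ r ≤ p, 0 ≤ s ≤ q} C(p,r) C(q,s) (−1)^{q−s}) H_j(x) H_{p+q−j}(y)`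
(the terms with `r > p` or `s > q` vanish since then the binomial coefficients are zero). -/
theorem complexHermite_eq_sum_hermite (p q : ℕ) (x y : ℝ) :
    complexHermite p q ((x : ℂ) + (y : ℂ) * Complex.I) =
      ∑ j ∈ Finset.range (p + q + 1),
        Complex.I ^ (p + q - j) *
          (∑ rs ∈ Finset.HasAntidiagonal.antidiagonal j,
            (p.choose rs.1 : ℂ) * (q.choose rs.2 : ℂ) * (-1 : ℂ) ^ (q - rs.2)) *
          (hermiteEval j x : ℂ) * (hermiteEval (p + q - j) y : ℂ) := by
  rw [complexHermite_eq_hermiteExpansion, hermiteExpansion, hermiteSum,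
    Nat.sum_antidiagonal_eq_sum_range_succ_mk]
  simp only [coeff_X_add_one_pow_mul_X_sub_one_pow]
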